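/- arXiv:1102.2734 — 2 statements merged into one kernel-verified Lean document; each statement's English description precedes it below -/
import Mathlib

section
/- For an (n,k) MDS code C over a finite field F_q, the treewidth equals the trelliswidth: κ(C) = τ(C) = min{k, n − k + 1}. -/
/-! An MDS code has no nonzero codeword on `n - k` coordinates, which together with a
dimension count forces `dim C_J = |J| - (n - k)` for every `J`. Hence every coordinate ordering
has the same branch dimensions, with maximum `min k (n - k + 1)`, and the path realizing an
ordering shows `κ(C) ≤ τ(C)`. Conversely, in any tree decomposition call an oriented edge heavy
when more than `n - k` coordinates lie beyond it. If there is none, every node has `κ_v = k`;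
otherwise, at the head of a heavy edge whose far side has fewest nodes, every other edge is light,
and the constraint dimension there is at least `min k (n - k + 1)`. -/

open Module

/-- The submodule of vectors supported on `J` (i.e. zero outside `J`). -/
def supportedOn (F : Type) [Field F] {n : ℕ} (J : Set (Fin n)) : Submodule F (Fin n → F) :=
  Submodule.pi Jᶜ fun _ => ⊥

/-- Dimension of the shortening `C_J` of the code `C` to the coordinates in `J`. -/
noncomputable def shortDim {F : Type} [Field F] {n : ℕ}
    (C : Submodule F (Fin n → F)) (J : Set (Fin n)) : ℕ :=
  finrank F ↥(C ⊓ supportedOn F J)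

/-- Hamming weight of a vector. -/
noncomputable def hWeight {F : Type} [Field F] {n : ℕ} (c : Fin n → F) : ℕ :=
  {i | c i ≠ 0}.ncard

/-- Minimum distance of a linear code. -/
noncomputable def minDist {F : Type} [Field F] {n : ℕ} (C : Submodule F (Fin n → F)) : ℕ :=
  sInf {w : ℕ | ∃ c ∈ C, c ≠ (0 : Fin n → F) ∧ hWeight c = w}

/-- Trelliswidth: the least branch complexity of any trellis realization of `C`,
minimized over all orderings (bijections from positions to coordinates) of `C`. -/
noncomputable def trellisWidth {F : Type} [Field F] {n : ℕ}
    (C : Submodule F (Fin n → F)) : ℕ :=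
  sInf {t : ℕ | ∃ π : Equiv.Perm (Fin n),
    t = Finset.univ.sup fun i : Fin n =>
      finrank F ↥C - shortDim C (⇑π '' {j | j < i}) - shortDim C (⇑π '' {j | i < j})}

/-- Degree of a vertex (the number of its neighbours). -/
noncomputable def deg {V : Type} (T : SimpleGraph V) (v : V) : ℕ :=
  (T.neighborSet v).ncard

/-- The set of leaves (degree-1 vertices) of a graph. -/
def leaves {V : Type} (T : SimpleGraph V) : Set V :=
  {v | deg T v = 1}

/-- A cubic tree: every node is a leaf (degree 1) or internal of degree 3. -/
def IsCubic {V : Type} (T : SimpleGraph V) : Prop :=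
  ∀ v, deg T v = 1 ∨ deg T v = 3

/-- `compAway T v u` : the vertex set of the component of `T` minus the edge `{v,u}`
containing `u` (hence not containing `v`); this is `T_{e,v}` for `e = {u,v}`. -/
def compAway {V : Type} (T : SimpleGraph V) (v u : V) : Set V :=
  {w | (T.deleteEdges {s(v, u)}).Reachable u w}

/-- `nAway T v u` : the number of leaves of `T` lying in the component of `T - {v,u}`
not containing `v`; this is `n_{e,v}` for `e = {u,v}`. -/
noncomputable def nAway {V : Type} (T : SimpleGraph V) (v u : V) : ℕ :=
  (compAway T v u ∩ leaves T).ncard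

/-- Neighbours of a vertex, as a `Finset`. -/
noncomputable def nbrFinset {V : Type} [Fintype V] (T : SimpleGraph V) (v : V) : Finset V :=
  (T.neighborSet v).toFinite.toFinset

/-- `κ_v`: local constraint-code dimension at node `v` of the minimal realization of `C`
on the tree decomposition `(T, ω)`. -/
noncomputable def kappaNode {F : Type} [Field F] {n : ℕ} (C : Submodule F (Fin n → F))
    {V : Type} [Fintype V] (T : SimpleGraph V) (ω : Fin n → V) (v : V) : ℕ :=
  finrank F ↥C - ∑ u ∈ nbrFinset T v, shortDim C (ω ⁻¹' compAway T v u)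

/-- Constraint complexity `κ(C; T, ω)` of the minimal realization of `C` on `(T, ω)`. -/
noncomputable def constraintComplexity {F : Type} [Field F] {n : ℕ}
    (C : Submodule F (Fin n → F)) {V : Type} [Fintype V]
    (T : SimpleGraph V) (ω : Fin n → V) : ℕ :=
  Finset.univ.sup (kappaNode C T ω)

/-- Treewidth of a code: the least constraint complexity of any of its tree
decompositions `(T, ω)` with `T` a finite tree. -/
noncomputable def treeWidth {F : Type} [Field F] {n : ℕ}
    (C : Submodule F (Fin n → F)) : ℕ :=
  sInf {t : ℕ | ∃ (N : ℕ) (T : SimpleGraph (Fin N)) (ω : Fin n → Fin N),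
    T.IsTree ∧ t = constraintComplexity C T ω}

open SimpleGraph Finset

section Shortening

variable {F : Type} [Field F] {n : ℕ}

lemma mem_supportedOn {J : Set (Fin n)} {x : Fin n → F} :
    x ∈ supportedOn F J ↔ ∀ i ∉ J, x i = 0 := by
  simp [supportedOn, Submodule.mem_pi]

lemma finrank_supportedOn (J : Set (Fin n)) : finrank F (supportedOn F J) = J.ncard := by
  classical
  have hJ : supportedOn F J = ⨅ i ∈ Jᶜ, LinearMap.ker (LinearMap.proj i) := by
    ext x
    simp [mem_supportedOn]
  rw [hJ, (LinearMap.iInfKerProjEquiv F (fun _ : Fin n => F) disjoint_compl_right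
    (by simp)).finrank_eq, Module.finrank_fintype_fun_eq_card, ← Nat.card_eq_fintype_card,
    Nat.card_coe_set_eq]

lemma supportedOn_mono {J L : Set (Fin n)} (h : L ⊆ J) : supportedOn F L ≤ supportedOn F J :=
  fun _ hx => mem_supportedOn.mpr fun i hi => mem_supportedOn.mp hx i (fun hL => hi (h hL))

lemma finrank_le_length (C : Submodule F (Fin n → F)) : finrank F C ≤ n :=
  (Submodule.finrank_le C).trans (Module.finrank_fin_fun F).le

lemma shortDim_le_ncard (C : Submodule F (Fin n → F)) (J : Set (Fin n)) :
    shortDim C J ≤ J.ncard :=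
  finrank_supportedOn (F := F) J ▸ Submodule.finrank_mono inf_le_right

lemma finrank_add_ncard_le_shortDim_add (C : Submodule F (Fin n → F)) (J : Set (Fin n)) :
    finrank F C + J.ncard ≤ shortDim C J + n := by
  have hsup := Submodule.finrank_sup_add_finrank_inf_eq C (supportedOn F J)
  have hle := finrank_le_length (C ⊔ supportedOn F J)
  rw [finrank_supportedOn] at hsup
  unfold shortDim
  omega

lemma shortDim_add_ncard_le {C : Submodule F (Fin n → F)} {J L : Set (Fin n)} (hLJ : L ⊆ J)
    (hL : C ⊓ supportedOn F L = ⊥) : shortDim C J + L.ncard ≤ J.ncard := by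
  have hsup := Submodule.finrank_sup_add_finrank_inf_eq (C ⊓ supportedOn F J) (supportedOn F L)
  have hinf : C ⊓ supportedOn F J ⊓ supportedOn F L = ⊥ :=
    eq_bot_iff.mpr fun x hx => hL ▸ ⟨hx.1.1, hx.2⟩
  have hle : C ⊓ supportedOn F J ⊔ supportedOn F L ≤ supportedOn F J :=
    sup_le inf_le_right (supportedOn_mono hLJ)
  rw [hinf, finrank_bot, add_zero, finrank_supportedOn] at hsup
  have := Submodule.finrank_mono hle
  rw [finrank_supportedOn] at this
  unfold shortDim
  omega

end Shortening

section MinDist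

variable {F : Type} [Field F] {n : ℕ}

lemma minDist_le_hWeight {C : Submodule F (Fin n → F)} {c : Fin n → F} (hc : c ∈ C)
    (hc0 : c ≠ 0) : minDist C ≤ hWeight c :=
  Nat.sInf_le ⟨c, hc, hc0, rfl⟩

lemma minDist_bot : minDist (⊥ : Submodule F (Fin n → F)) = 0 := by
  simp [minDist]

lemma hWeight_le_ncard {J : Set (Fin n)} {c : Fin n → F} (hc : c ∈ supportedOn F J) :
    hWeight c ≤ J.ncard :=
  Set.ncard_le_ncard (fun i hi => by_contra fun hiJ => hi (mem_supportedOn.mp hc i hiJ))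

lemma inf_supportedOn_eq_bot {C : Submodule F (Fin n → F)} {J : Set (Fin n)}
    (hJ : J.ncard < minDist C) : C ⊓ supportedOn F J = ⊥ :=
  eq_bot_iff.mpr fun _ hc => by_contra fun hc0 =>
    (hJ.trans_le ((minDist_le_hWeight hc.1 hc0).trans (hWeight_le_ncard hc.2))).false

lemma shortDim_eq_of_lt_minDist {C : Submodule F (Fin n → F)} (hC : n - finrank F C < minDist C)
    (J : Set (Fin n)) : shortDim C J = J.ncard - (n - finrank F C) := by
  obtain ⟨L, hLJ, hL⟩ := Set.exists_subset_card_eq (min_le_left J.ncard (n - finrank F C))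
  have hupper := shortDim_add_ncard_le hLJ (inf_supportedOn_eq_bot (C := C) (by omega))
  have hlower := finrank_add_ncard_le_shortDim_add C J
  omega

end MinDist

section Trellis

variable {F : Type} [Field F] {n : ℕ}

lemma ncard_setOf_lt (i : Fin n) : {j : Fin n | j < i}.ncard = i := by
  rw [show {j : Fin n | j < i} = ↑(Iio i) by ext; simp, Set.ncard_coe_finset, Fin.card_Iio]

lemma ncard_setOf_gt (i : Fin n) : {j : Fin n | i < j}.ncard = n - 1 - i := by
  rw [show {j : Fin n | i < j} = ↑(Ioi i) by ext; simp, Set.ncard_coe_finset, Fin.card_Ioi]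

lemma sup_mdsBranchDim {k : ℕ} (hk : k ≤ n) :
    (univ : Finset (Fin n)).sup (fun i => k - (i - (n - k)) - (n - 1 - i - (n - k)))
      = min k (n - k + 1) := by
  refine le_antisymm (Finset.sup_le fun i _ => by omega) ?_
  rcases Nat.eq_zero_or_pos k with rfl | hk0
  · simp
  · refine le_trans ?_ (le_sup (mem_univ (⟨min (k - 1) (n - k), by omega⟩ : Fin n)))
    dsimp only
    omega

lemma trellisWidth_eq_of_shortDim_eq {C : Submodule F (Fin n → F)}
    (hsd : ∀ J, shortDim C J = J.ncard - (n - finrank F C)) :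
    trellisWidth C = min (finrank F C) (n - finrank F C + 1) := by
  have hbranch : ∀ π : Equiv.Perm (Fin n), (univ.sup fun i : Fin n =>
      finrank F C - shortDim C (π '' {j | j < i}) - shortDim C (π '' {j | i < j}))
        = min (finrank F C) (n - finrank F C + 1) := by
    intro π
    simp only [hsd, Set.ncard_image_of_injective _ π.injective, ncard_setOf_lt, ncard_setOf_gt]
    exact sup_mdsBranchDim (finrank_le_length C)
  have hset : {t : ℕ | ∃ π : Equiv.Perm (Fin n), t = univ.sup fun i : Fin n =>
      finrank F C - shortDim C (π '' {j | j < i}) - shortDim C (π '' {j | i < j})}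
        = {min (finrank F C) (n - finrank F C + 1)} := by
    ext t
    simp only [Set.mem_ofPred_eq, Set.mem_singleton_iff, hbranch, exists_const]
  rw [trellisWidth, hset, csInf_singleton]

end Trellis

section Tree

variable {V : Type} {T : SimpleGraph V} {u v w : V}

lemma SimpleGraph.Reachable.mem_of_adj_closed {S : Set V}
    (hS : ∀ a b, T.Adj a b → a ∈ S → b ∈ S) {x y : V} (h : T.Reachable x y)
    (hx : x ∈ S) : y ∈ S := by
  obtain ⟨p⟩ := h
  induction p with
  | nil => exact hx
  | cons hab _ ih => exact ih (hS _ _ hab hx)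

lemma mem_compAway_self : u ∈ compAway T v u := Reachable.refl u

lemma notMem_compAway (hT : T.IsAcyclic) (h : T.Adj v u) : v ∉ compAway T v u :=
  fun hv => isBridge_iff.mp (isAcyclic_iff_forall_adj_isBridge.mp hT h) hv.symm

lemma SimpleGraph.Adj.deleteEdges_singleton {a b : V} {e : Sym2 V} (h : T.Adj a b)
    (hne : s(a, b) ≠ e) : (T.deleteEdges {e}).Adj a b :=
  deleteEdges_adj.mpr ⟨h, hne⟩

lemma compAway_ssubset (hT : T.IsAcyclic) (hvu : T.Adj v u) (huw : T.Adj u w) (hwv : w ≠ v) :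
    compAway T u w ⊂ compAway T v u := by
  classical
  have hne : s(u, w) ≠ s(v, u) := by
    rw [Ne, Sym2.eq_iff]
    rintro (⟨rfl, -⟩ | ⟨-, rfl⟩)
    exacts [hvu.ne rfl, hwv rfl]
  refine ⟨fun x hx => ?_, fun hsub => notMem_compAway hT huw (hsub mem_compAway_self)⟩
  obtain ⟨p, hp⟩ := reachable_deleteEdges_iff_exists_walk.mp hx
  -- using the edge `vu` would take the walk to `v` and hence across to `u`
  have hvu_notMem : s(v, u) ∉ p.edges := by
    intro he
    have hv : v ∈ compAway T u w := reachable_deleteEdges_iff_exists_walk.mpr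
      ⟨p.takeUntil v (p.fst_mem_support_of_mem_edges he),
        fun h => hp (p.edges_takeUntil_subset_edges _ h)⟩
    exact notMem_compAway hT huw
      (hv.trans (hvu.deleteEdges_singleton (Sym2.eq_swap (a := v) ▸ hne.symm)).reachable)
  exact (huw.deleteEdges_singleton hne).reachable.trans
    (reachable_deleteEdges_iff_exists_walk.mpr ⟨p, hvu_notMem⟩)

lemma compl_compAway (hT : T.IsTree) (h : T.Adj v u) : (compAway T v u)ᶜ = compAway T u v := by
  have hswap : s(u, v) = s(v, u) := Sym2.eq_swap
  ext x
  refine ⟨fun hx => ?_, fun hx hx' => ?_⟩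
  · have hclosed : ∀ a b, T.Adj a b → a ∈ compAway T u v ∪ compAway T v u →
        b ∈ compAway T u v ∪ compAway T v u := by
      intro a b hab ha
      by_cases he : s(a, b) = s(v, u)
      · rcases Sym2.eq_iff.mp he with ⟨-, rfl⟩ | ⟨-, rfl⟩
        exacts [Or.inr mem_compAway_self, Or.inl mem_compAway_self]
      · have hadj : (T.deleteEdges {s(v, u)}).Adj a b := hab.deleteEdges_singleton he
        rcases ha with ha | ha
        · exact Or.inl (ha.trans (hswap ▸ hadj).reachable)
        · exact Or.inr (ha.trans hadj.reachable)
    exact ((hT.connected v x).mem_of_adj_closed hclosed (Or.inl mem_compAway_self)).resolve_right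
      hx
  · have hvx : (T.deleteEdges {s(v, u)}).Reachable v x := hswap ▸ hx
    exact notMem_compAway hT.isAcyclic h (hvx.trans hx'.symm).symm

end Tree

section PathGraph

variable {n : ℕ} {a b : Fin n}

lemma pathGraph_deleteEdges_adj_le_iff (hab : a.val + 1 = b.val) {x y : Fin n}
    (h : ((pathGraph n).deleteEdges {s(a, b)}).Adj x y) : x ≤ a ↔ y ≤ a := by
  obtain ⟨hxy, hne⟩ := deleteEdges_adj.mp h
  rw [pathGraph_adj] at hxy
  simp only [Set.mem_singleton_iff, Sym2.eq_iff, Fin.ext_iff, not_or, not_and] at hne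
  simp only [Fin.le_def]
  omega

lemma pathGraph_deleteEdges_reachable_le_iff (hab : a.val + 1 = b.val) {x y : Fin n}
    (h : ((pathGraph n).deleteEdges {s(a, b)}).Reachable x y) : x ≤ a ↔ y ≤ a :=
  have hclosed : ∀ c d, ((pathGraph n).deleteEdges {s(a, b)}).Adj c d →
      c ∈ {z | z ≤ a} → d ∈ {z | z ≤ a} :=
    fun _ _ hcd => (pathGraph_deleteEdges_adj_le_iff hab hcd).mp
  ⟨h.mem_of_adj_closed hclosed, h.symm.mem_of_adj_closed hclosed⟩

lemma isTree_pathGraph (hn : 0 < n) : (pathGraph n).IsTree := by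
  obtain ⟨m, rfl⟩ := Nat.exists_eq_add_of_lt hn
  refine ⟨pathGraph_connected _, isAcyclic_iff_forall_adj_isBridge.mpr fun x y hxy => ?_⟩
  wlog hlt : x.val + 1 = y.val generalizing x y
  · rw [Sym2.eq_swap]
    exact this y x hxy.symm ((pathGraph_adj.mp hxy).resolve_left hlt)
  rw [isBridge_iff]
  intro hr
  have := (pathGraph_deleteEdges_reachable_le_iff hlt hr).mp le_rfl
  simp only [Fin.le_def] at this
  omega

lemma compAway_pathGraph (hab : a.val + 1 = b.val) :
    compAway (pathGraph n) a b = {w | a < w} ∧ compAway (pathGraph n) b a = {w | w < b} := by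
  have hsub : compAway (pathGraph n) a b ⊆ {w | a < w} := by
    intro w hw
    have := mt (pathGraph_deleteEdges_reachable_le_iff hab hw).mpr
    simp only [Set.mem_ofPred_eq, Fin.lt_def, Fin.le_def] at this ⊢
    omega
  have hsub' : compAway (pathGraph n) b a ⊆ {w | w < b} := by
    intro w hw
    rw [compAway, Set.mem_ofPred_eq, Sym2.eq_swap] at hw
    have := (pathGraph_deleteEdges_reachable_le_iff hab hw).mp le_rfl
    simp only [Set.mem_ofPred_eq, Fin.lt_def, Fin.le_def] at this ⊢
    omega
  have hcompl := compl_compAway (isTree_pathGraph a.pos) (pathGraph_adj.mpr (Or.inl hab))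
  have hlt_compl : {w | w < b} = {w | a < w}ᶜ := by
    ext w
    simp only [Set.mem_ofPred_eq, Set.mem_compl_iff, Fin.lt_def]
    omega
  have hup : compAway (pathGraph n) a b = {w | a < w} :=
    hsub.antisymm (Set.compl_subset_compl.mp (hcompl ▸ hlt_compl ▸ hsub'))
  exact ⟨hup, by rw [← hcompl, hup, hlt_compl]⟩

end PathGraph

section TreeWidthLeTrellisWidth

variable {F : Type} [Field F] {n : ℕ}

lemma mem_nbrFinset {V : Type} [Fintype V] {T : SimpleGraph V} {v u : V} :
    u ∈ nbrFinset T v ↔ T.Adj v u := by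
  simp [nbrFinset]

lemma kappaNode_pathGraph_le (C : Submodule F (Fin n → F)) (π : Equiv.Perm (Fin n))
    (i : Fin n) : kappaNode C (pathGraph n) π.symm i ≤
      finrank F C - shortDim C (π '' {j | j < i}) - shortDim C (π '' {j | i < j}) := by
  classical
  set f := fun u => shortDim C (π.symm ⁻¹' compAway (pathGraph n) i u)
  have hlo :
      shortDim C (π '' {j | j < i}) ≤ ∑ u ∈ nbrFinset (pathGraph n) i with u < i, f u := by
    rcases Nat.eq_zero_or_pos i.val with h0 | hpos
    · have := shortDim_le_ncard C (π '' {j | j < i})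
      rw [Set.ncard_image_of_injective _ π.injective, ncard_setOf_lt, h0] at this
      omega
    · let l : Fin n := ⟨i - 1, by omega⟩
      have hl : l.val + 1 = i.val := by simp only [l]; omega
      have hfl : f l = shortDim C (π '' {j | j < i}) := by
        simp only [f, (compAway_pathGraph hl).2, Equiv.image_eq_preimage_symm]
      exact hfl ▸ single_le_sum (fun _ _ => Nat.zero_le _) (mem_filter.mpr
        ⟨mem_nbrFinset.mpr (pathGraph_adj.mpr (Or.inr hl)), Fin.lt_def.mpr (by omega)⟩)
  have hhi :
      shortDim C (π '' {j | i < j}) ≤ ∑ u ∈ nbrFinset (pathGraph n) i with i < u, f u := by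
    by_cases hlast : i.val + 1 < n
    · let r : Fin n := ⟨i + 1, hlast⟩
      have hr : i.val + 1 = r.val := rfl
      have hfr : f r = shortDim C (π '' {j | i < j}) := by
        simp only [f, (compAway_pathGraph hr).1, Equiv.image_eq_preimage_symm]
      exact hfr ▸ single_le_sum (fun _ _ => Nat.zero_le _) (mem_filter.mpr
        ⟨mem_nbrFinset.mpr (pathGraph_adj.mpr (Or.inl hr)), Fin.lt_def.mpr (by omega)⟩)
    · have := shortDim_le_ncard C (π '' {j | i < j})
      rw [Set.ncard_image_of_injective _ π.injective, ncard_setOf_gt] at this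
      omega
  have hsplit : (∑ u ∈ nbrFinset (pathGraph n) i with u < i, f u) +
      (∑ u ∈ nbrFinset (pathGraph n) i with i < u, f u) ≤
        ∑ u ∈ nbrFinset (pathGraph n) i, f u := by
    rw [← sum_union (disjoint_filter.mpr fun _ _ h1 h2 => lt_asymm h1 h2)]
    exact sum_le_sum_of_subset (union_subset (filter_subset _ _) (filter_subset _ _))
  change finrank F C - ∑ u ∈ nbrFinset (pathGraph n) i, f u ≤ _
  omega

theorem treeWidth_le_trellisWidth (hn : 0 < n) (C : Submodule F (Fin n → F)) :
    treeWidth C ≤ trellisWidth C := by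
  obtain ⟨π, hπ⟩ : trellisWidth C ∈ {t : ℕ | ∃ π : Equiv.Perm (Fin n),
      t = univ.sup fun i : Fin n =>
        finrank F C - shortDim C (π '' {j | j < i}) - shortDim C (π '' {j | i < j})} :=
    Nat.sInf_mem ⟨_, 1, rfl⟩
  calc treeWidth C ≤ constraintComplexity C (pathGraph n) π.symm :=
        Nat.sInf_le ⟨n, pathGraph n, π.symm, isTree_pathGraph hn, rfl⟩
    _ ≤ trellisWidth C := hπ ▸ sup_mono_fun fun i _ => kappaNode_pathGraph_le C π i

end TreeWidthLeTrellisWidth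

section TreeWidthLowerBound

variable {F : Type} [Field F] {n : ℕ} {V : Type} {T : SimpleGraph V}

lemma ncard_preimage_compAway_add (hT : T.IsTree) (ω : Fin n → V) {u v : V} (h : T.Adj v u) :
    (ω ⁻¹' compAway T u v).ncard + (ω ⁻¹' compAway T v u).ncard = n := by
  rw [← compl_compAway hT h, Set.preimage_compl, add_comm, Set.ncard_add_ncard_compl,
    Nat.card_fin]

variable [Fintype V]

lemma kappaNode_eq_of_shortDim_eq_zero (C : Submodule F (Fin n → F)) (ω : Fin n → V) {u v : V}
    (hvu : T.Adj v u)
    (h : ∀ w, T.Adj u w → w ≠ v → shortDim C (ω ⁻¹' compAway T u w) = 0) :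
    kappaNode C T ω u = finrank F C - shortDim C (ω ⁻¹' compAway T u v) :=
  congrArg (finrank F C - ·) <| sum_eq_single_of_mem v (mem_nbrFinset.mpr hvu.symm)
    fun w hw => h w (mem_nbrFinset.mp hw)

lemma exists_le_kappaNode (hT : T.IsTree) (ω : Fin n → V) {C : Submodule F (Fin n → F)}
    (hsd : ∀ J, shortDim C J = J.ncard - (n - finrank F C)) :
    ∃ x, min (finrank F C) (n - finrank F C + 1) ≤ kappaNode C T ω x := by
  by_cases hheavy : ∃ p : V × V,
      T.Adj p.1 p.2 ∧ n - finrank F C < (ω ⁻¹' compAway T p.1 p.2).ncard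
  · -- a heavy edge whose far side has the fewest nodes
    obtain ⟨⟨v, u⟩, hvu_heavy, hmin⟩ :=
      (measure fun p : V × V => (compAway T p.1 p.2).ncard).wf.has_min _ hheavy
    obtain ⟨hvu, hbig⟩ :
        T.Adj v u ∧ n - finrank F C < (ω ⁻¹' compAway T v u).ncard := hvu_heavy
    have hlight : ∀ w, T.Adj u w → w ≠ v → shortDim C (ω ⁻¹' compAway T u w) = 0 := by
      intro w huw hwv
      have hlt := Set.ncard_lt_ncard (compAway_ssubset hT.isAcyclic hvu huw hwv) (Set.toFinite _)
      have hnot : ¬ n - finrank F C < (ω ⁻¹' compAway T u w).ncard :=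
        fun h => hmin (u, w) ⟨huw, h⟩ hlt
      rw [hsd]
      omega
    have hcompl := ncard_preimage_compAway_add hT ω hvu
    refine ⟨u, ?_⟩
    rw [kappaNode_eq_of_shortDim_eq_zero C ω hvu hlight, hsd]
    omega
  · push Not at hheavy
    obtain ⟨x⟩ := hT.connected.nonempty
    have hsum : ∑ w ∈ nbrFinset T x, shortDim C (ω ⁻¹' compAway T x w) = 0 :=
      sum_eq_zero fun w hw => by
        have : (ω ⁻¹' compAway T x w).ncard ≤ n - finrank F C :=
          hheavy (x, w) (mem_nbrFinset.mp hw)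
        rw [hsd]
        omega
    refine ⟨x, ?_⟩
    rw [kappaNode, hsum]
    omega

lemma le_treeWidth {C : Submodule F (Fin n → F)} {m : ℕ}
    (h : ∀ N (T : SimpleGraph (Fin N)) ω, T.IsTree → m ≤ constraintComplexity C T ω) :
    m ≤ treeWidth C :=
  le_csInf ⟨_, 1, ⊥, fun _ => 0, IsTree.of_subsingleton, rfl⟩
    fun _ ⟨N, T, ω, hT, ht⟩ => ht ▸ h N T ω hT

end TreeWidthLowerBound

theorem stmt5_general {F : Type} [Field F] {n k : ℕ}
    (C : Submodule F (Fin n → F)) (hk : finrank F ↥C = k)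
    (hmds : minDist C = n - k + 1) :
    treeWidth C = trellisWidth C ∧ trellisWidth C = min k (n - k + 1) := by
  subst hk
  have hk0 : 0 < finrank F C := by
    refine Nat.pos_of_ne_zero fun h0 => ?_
    rw [Submodule.finrank_eq_zero.mp h0, minDist_bot] at hmds
    omega
  have hsd := shortDim_eq_of_lt_minDist (C := C) (by omega)
  have htr := trellisWidth_eq_of_shortDim_eq hsd
  have hlow : min (finrank F C) (n - finrank F C + 1) ≤ treeWidth C :=
    le_treeWidth fun _ _ ω hT =>
      let ⟨x, hx⟩ := exists_le_kappaNode hT ω hsd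
      hx.trans (le_sup (mem_univ x))
  have hup := treeWidth_le_trellisWidth (hk0.trans_le (finrank_le_length C)) C
  exact ⟨le_antisymm hup (htr ▸ hlow), htr⟩

/-- for an `(n,k)` MDS code, the treewidth equals the trelliswidth,
and both equal `min {k, n−k+1}`. -/
theorem stmt5 {F : Type} [Field F] [Fintype F] {n k : ℕ}
    (C : Submodule F (Fin n → F)) (hk : finrank F ↥C = k)
    (hmds : minDist C = n - k + 1) :
    treeWidth C = trellisWidth C ∧ trellisWidth C = min k (n - k + 1) :=
  stmt5_general C hk hmds
end

section
/- Let m ≥ 2 and let i, j be integers with 0 ≤ i ≤ α^(m) and 0 ≤ j ≤ β^(m). If m is even and P^(m)(i,j) holds, then P^(m+1)(2i+1, 2j) holds. If m is odd and P^(m)(i,j) holds, then P^(m+1)(2i, 2j+1) holds. -/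
open Module

/-- `α(m)`: the largest integer not exceeding `(2/3)·2^m`. -/
def alph (m : ℕ) : ℕ := 2 ^ (m + 1) / 3

/-- `β(m)`: the largest integer not exceeding `(1/3)·2^m`. -/
def bet (m : ℕ) : ℕ := 2 ^ m / 3

/-- `wt x`: the number of ones in the binary representation of `x`. -/
def wtN (x : ℕ) : ℕ := (Nat.digits 2 x).count 1

/-- `w_l(S)`: the number of elements of `S` of binary weight at least `l`. -/
def wcount (l : ℕ) (S : Finset ℕ) : ℕ := (S.filter fun x => l ≤ wtN x).card

/-- The statement `P^(m)(i,j)`: for every `l ∈ {1,…,m}`,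
`w_l([α−i, α−1]) + w_l([β−j, β−1]) ≥ w_l([1, i+j])`. -/
def Pm (m i j : ℕ) : Prop :=
  ∀ l, 1 ≤ l → l ≤ m →
    wcount l (Finset.Icc (alph m - i) (alph m - 1)) +
      wcount l (Finset.Icc (bet m - j) (bet m - 1)) ≥
      wcount l (Finset.Icc 1 (i + j))

/-!
Writing `D S = 2S ∪ (2S + 1)`, appending a binary digit gives `w_{l+1}(D S) = w_{l+1}(S) + w_l(S)`.
Passing from `m` to `m + 1`, one of `α, β` doubles and the other doubles plus one, so the two
intervals at level `m + 1` are `D[α−i, α−1] ∪ {2α}` and `D[β−j, β−1]` (or symmetrically), while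
`[1, 2(i+j)+1] = D[1, i+j] ∪ {1}`. Hence `P^(m+1)` at level `l + 1` follows from `P^(m)` at levels
`l` and `l + 1`, the extra point `2α` covering the point `1`. The boundary levels need separate
care: at level `0` the inequality is between cardinalities, and at level `m + 1` the right-hand
side vanishes because `i + j ≤ α + β = 2^m − 1`.
-/

open Finset

lemma wtN_two_mul (x : ℕ) : wtN (2 * x) = wtN x := by
  rcases Nat.eq_zero_or_pos x with rfl | hx
  · rfl
  · rw [wtN, Nat.digits_def' (by norm_num) (by omega)]
    simp [wtN]

lemma wtN_two_mul_add_one (x : ℕ) : wtN (2 * x + 1) = wtN x + 1 := by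
  rw [wtN, Nat.digits_def' (by norm_num) (by omega)]
  simp [wtN, Nat.mul_add_div]

/-- The leading binary digit of a positive number is a `1`. -/
lemma one_le_wtN {x : ℕ} (hx : x ≠ 0) : 1 ≤ wtN x := by
  have hlast := Nat.getLast_digit_ne_zero 2 hx
  have hmem := List.getLast_mem (Nat.digits_ne_nil_iff_ne_zero (b := 2).mpr hx)
  have hlt := Nat.digits_lt_base (by norm_num) hmem
  rw [show (Nat.digits 2 x).getLast _ = 1 by omega] at hmem
  exact List.count_pos_iff.mpr hmem

lemma wtN_le_of_lt_two_pow {x m : ℕ} (h : x < 2 ^ m) : wtN x ≤ m := by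
  rcases Nat.eq_zero_or_pos x with rfl | hx
  · simp [wtN]
  · calc wtN x ≤ (Nat.digits 2 x).length := List.count_le_length
      _ = Nat.log 2 x + 1 := Nat.length_digits 2 x (by norm_num) hx.ne'
      _ ≤ m := Nat.log_lt_of_lt_pow hx.ne' h

lemma wcount_zero (S : Finset ℕ) : wcount 0 S = #S := by
  simp [wcount]

lemma wcount_insert (l x : ℕ) {S : Finset ℕ} (hx : x ∉ S) :
    wcount l (insert x S) = wcount l S + if l ≤ wtN x then 1 else 0 := by
  unfold wcount
  rw [filter_insert]
  split_ifs
  · exact card_insert_of_notMem (fun h => hx (mem_of_mem_filter _ h))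
  · rfl

lemma wcount_eq_zero_of_lt_two_pow {S : Finset ℕ} {l m : ℕ} (hS : ∀ x ∈ S, x < 2 ^ m)
    (hl : m < l) : wcount l S = 0 := by
  rw [wcount, card_eq_zero, filter_eq_empty_iff]
  exact fun x hx => by have := wtN_le_of_lt_two_pow (hS x hx); omega

def doubling (S : Finset ℕ) : Finset ℕ := S.image (2 * ·) ∪ S.image (2 * · + 1)

lemma disjoint_image_two_mul_image_two_mul_add_one (S T : Finset ℕ) :
    Disjoint (S.image (2 * ·)) (T.image (2 * · + 1)) := by
  simp only [disjoint_left, mem_image]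
  omega

lemma card_doubling (S : Finset ℕ) : #(doubling S) = 2 * #S := by
  rw [doubling, card_union_of_disjoint (disjoint_image_two_mul_image_two_mul_add_one S S),
    card_image_of_injective _ (fun x y h => by omega),
    card_image_of_injective _ (fun x y h => by omega)]
  ring

lemma wcount_succ_doubling (l : ℕ) (S : Finset ℕ) :
    wcount (l + 1) (doubling S) = wcount (l + 1) S + wcount l S := by
  rw [wcount, doubling, filter_union,
    card_union_of_disjoint ((disjoint_image_two_mul_image_two_mul_add_one S S).mono
      (filter_subset _ _) (filter_subset _ _)),
    filter_image, filter_image,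
    card_image_of_injective _ (fun x y h => by omega),
    card_image_of_injective _ (fun x y h => by omega)]
  simp [wtN_two_mul, wtN_two_mul_add_one, wcount]

lemma doubling_Icc (a b : ℕ) : doubling (Icc a b) = Icc (2 * a) (2 * b + 1) := by
  ext x
  simp only [doubling, mem_union, mem_image, mem_Icc]
  constructor
  · rintro (⟨y, hy, rfl⟩ | ⟨y, hy, rfl⟩) <;> omega
  · intro hx
    rcases Nat.even_or_odd' x with ⟨y, rfl | rfl⟩
    · exact Or.inl ⟨y, by omega, rfl⟩
    · exact Or.inr ⟨y, by omega, rfl⟩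

lemma two_pow_mod_three_of_even {m : ℕ} (hm : Even m) : 2 ^ m % 3 = 1 := by
  obtain ⟨k, rfl⟩ := hm
  rw [← two_mul, pow_mul, Nat.pow_mod]
  norm_num

lemma two_pow_mod_three_of_odd {m : ℕ} (hm : Odd m) : 2 ^ m % 3 = 2 := by
  obtain ⟨k, rfl⟩ := hm
  rw [pow_succ, pow_mul, Nat.mul_mod, Nat.pow_mod]
  norm_num

lemma alph_add_bet (m : ℕ) : alph m + bet m = 2 ^ m - 1 := by
  have : 2 ^ m % 3 = 1 ∨ 2 ^ m % 3 = 2 :=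
    (Nat.even_or_odd m).imp two_pow_mod_three_of_even two_pow_mod_three_of_odd
  simp only [alph, bet, pow_succ]
  omega

lemma bet_le_alph (m : ℕ) : bet m ≤ alph m :=
  Nat.div_le_div_right (Nat.pow_le_pow_right (by norm_num) m.le_succ)

lemma one_le_bet {m : ℕ} (hm : 2 ≤ m) : 1 ≤ bet m :=
  Nat.div_pos ((Nat.pow_le_pow_right (by norm_num) hm).trans' (by norm_num)) (by norm_num)

lemma alph_succ_of_even {m : ℕ} (hm : Even m) : alph (m + 1) = 2 * alph m + 1 := by
  have := two_pow_mod_three_of_even hm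
  simp only [alph, pow_succ]
  omega

lemma bet_succ_of_even {m : ℕ} (hm : Even m) : bet (m + 1) = 2 * bet m := by
  have := two_pow_mod_three_of_even hm
  simp only [bet, pow_succ]
  omega

lemma alph_succ_of_odd {m : ℕ} (hm : Odd m) : alph (m + 1) = 2 * alph m := by
  have := two_pow_mod_three_of_odd hm
  simp only [alph, pow_succ]
  omega

lemma bet_succ_of_odd {m : ℕ} (hm : Odd m) : bet (m + 1) = 2 * bet m + 1 := by
  have := two_pow_mod_three_of_odd hm
  simp only [bet, pow_succ]
  omega

/-- At `l = 0` this compares cardinalities, which the doubling step needs. -/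
def WtDominates (A B C : Finset ℕ) : Prop := ∀ l, wcount l C ≤ wcount l A + wcount l B

namespace WtDominates

variable {A B C : Finset ℕ}

lemma symm (h : WtDominates A B C) : WtDominates B A C :=
  fun l => (h l).trans_eq (add_comm _ _)

lemma doubling_insert (h : WtDominates A B C) {x y : ℕ} (hx : x ∉ doubling A)
    (hy : y ∉ doubling C) (hxy : wtN y ≤ wtN x) :
    WtDominates (insert x (doubling A)) (doubling B) (insert y (doubling C)) := by
  intro l
  rw [wcount_insert l x hx, wcount_insert l y hy]
  have hxy' : (if l ≤ wtN y then 1 else 0) ≤ if l ≤ wtN x then 1 else 0 := by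
    split_ifs <;> omega
  cases l with
  | zero =>
    have := h 0
    simp only [wcount_zero, card_doubling] at this ⊢
    omega
  | succ l =>
    have := h l
    have := h (l + 1)
    simp only [wcount_succ_doubling]
    omega

lemma Icc_double {a b i j : ℕ} (ha : 1 ≤ a) (hb : 1 ≤ b)
    (h : WtDominates (Icc (a - i) (a - 1)) (Icc (b - j) (b - 1)) (Icc 1 (i + j))) :
    WtDominates (Icc (2 * a + 1 - (2 * i + 1)) (2 * a + 1 - 1)) (Icc (2 * b - 2 * j) (2 * b - 1))
      (Icc 1 (2 * i + 1 + 2 * j)) := by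
  have hA : Icc (2 * a + 1 - (2 * i + 1)) (2 * a + 1 - 1) =
      insert (2 * a) (doubling (Icc (a - i) (a - 1))) := by
    rw [doubling_Icc]; ext; simp only [mem_insert, mem_Icc]; omega
  have hB : Icc (2 * b - 2 * j) (2 * b - 1) = doubling (Icc (b - j) (b - 1)) := by
    rw [doubling_Icc]; congr 1 <;> omega
  have hC : Icc 1 (2 * i + 1 + 2 * j) = insert 1 (doubling (Icc 1 (i + j))) := by
    rw [doubling_Icc]; ext; simp only [mem_insert, mem_Icc]; omega
  rw [hA, hB, hC]
  refine h.doubling_insert ?_ ?_ ?_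
  · simp only [doubling_Icc, mem_Icc]; omega
  · simp only [doubling_Icc, mem_Icc]; omega
  · rw [wtN_two_mul]
    exact one_le_wtN (by omega)

end WtDominates

lemma wtDominates_of_Pm {m i j : ℕ} (hm : 2 ≤ m) (hi : i ≤ alph m) (hj : j ≤ bet m)
    (h : Pm m i j) :
    WtDominates (Icc (alph m - i) (alph m - 1)) (Icc (bet m - j) (bet m - 1)) (Icc 1 (i + j)) := by
  have hb := one_le_bet hm
  have hab := bet_le_alph m
  intro l
  rcases Nat.eq_zero_or_pos l with rfl | hl
  · simp only [wcount_zero, Nat.card_Icc]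
    omega
  rcases le_or_gt l m with hlm | hml
  · exact h l hl hlm
  · have := alph_add_bet m
    have := m.one_le_two_pow
    rw [wcount_eq_zero_of_lt_two_pow (fun x hx => by rw [mem_Icc] at hx; omega) hml]
    exact Nat.zero_le _

/-- Lemma 6: for even `m`, `P^(m)(i,j)` implies `P^(m+1)(2i+1, 2j)`;
for odd `m`, `P^(m)(i,j)` implies `P^(m+1)(2i, 2j+1)`. -/
theorem stmt15 (m : ℕ) (hm : 2 ≤ m) (i j : ℕ) (hi : i ≤ alph m) (hj : j ≤ bet m) :
    (Even m → Pm m i j → Pm (m + 1) (2 * i + 1) (2 * j)) ∧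
    (Odd m → Pm m i j → Pm (m + 1) (2 * i) (2 * j + 1)) := by
  have ha : 1 ≤ alph m := (one_le_bet hm).trans (bet_le_alph m)
  have hb : 1 ≤ bet m := one_le_bet hm
  refine ⟨fun heven hP l _ _ => ?_, fun hodd hP l _ _ => ?_⟩
  · rw [alph_succ_of_even heven, bet_succ_of_even heven]
    exact (wtDominates_of_Pm hm hi hj hP).Icc_double ha hb l
  · have hD := wtDominates_of_Pm hm hi hj hP
    rw [add_comm i j] at hD
    rw [alph_succ_of_odd hodd, bet_succ_of_odd hodd, add_comm (2 * i)]
    exact (hD.symm.Icc_double hb ha).symm l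
end
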